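/- Let S, U, V, X₁, X₂, Y be jointly distributed random variables taking values in finite sets such that (U,V) ↔ (S,X₁,X₂) ↔ Y is a Markov chain, i.e., I(U,V ; Y | S,X₁,X₂) = 0. Then I(U,V,X₁,X₂ ; Y) - I(U,V,X₁,X₂ ; S) ≤ I(V,X₁,X₂ ; Y) - I(V,X₁,X₂ ; S). -/

import Mathlib

open scoped BigOperators
open Classical

noncomputable section

/-- Probability that the random variable `X` equals `x` under the pmf `p`. -/
def pr {Ω α : Type*} [Fintype Ω] (p : Ω → ℝ) (X : Ω → α) (x : α) : ℝ :=
  ∑ ω : Ω, if X ω = x then p ω else 0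

/-- Shannon entropy (in bits), with the convention `0 · log₂ 0 = 0`. -/
def ent {Ω α : Type*} [Fintype Ω] (p : Ω → ℝ) (X : Ω → α) : ℝ :=
  -∑ x ∈ Finset.univ.image X, pr p X x * Real.logb 2 (pr p X x)

/-- Conditional entropy `H(X|Y) = H(X,Y) - H(Y)`. -/
def condEnt {Ω α β : Type*} [Fintype Ω] (p : Ω → ℝ) (X : Ω → α) (Y : Ω → β) : ℝ :=
  ent p (fun ω => (X ω, Y ω)) - ent p Y

/-- Mutual information `I(X;Y) = H(X) + H(Y) - H(X,Y)`. -/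
def mi {Ω α β : Type*} [Fintype Ω] (p : Ω → ℝ) (X : Ω → α) (Y : Ω → β) : ℝ :=
  ent p X + ent p Y - ent p (fun ω => (X ω, Y ω))

/-- Conditional mutual information `I(X;Y|Z) = H(X,Z) + H(Y,Z) - H(X,Y,Z) - H(Z)`. -/
def cmi {Ω α β γ : Type*} [Fintype Ω] (p : Ω → ℝ) (X : Ω → α) (Y : Ω → β) (Z : Ω → γ) : ℝ :=
  ent p (fun ω => (X ω, Z ω)) + ent p (fun ω => (Y ω, Z ω))
    - ent p (fun ω => (X ω, Y ω, Z ω)) - ent p Z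

/-- `p` is a probability mass function on the finite sample space `Ω`. -/
def IsPMF {Ω : Type*} [Fintype Ω] (p : Ω → ℝ) : Prop :=
  (∀ ω, 0 ≤ p ω) ∧ ∑ ω : Ω, p ω = 1

/-- The random variables `X` and `Y` are independent under `p`. -/
def IndepRV {Ω α β : Type*} [Fintype Ω] (p : Ω → ℝ) (X : Ω → α) (Y : Ω → β) : Prop :=
  ∀ x y, pr p (fun ω => (X ω, Y ω)) (x, y) = pr p X x * pr p Y y

end

/-!
Write `W = (V, X₁, X₂)`. By the chain rule the claim reads `I(U;Y|W) ≤ I(U;S|W)`, and expanded into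
joint entropies it is the sum of the Markov identity `I(U,V;Y|S,X₁,X₂) = 0` with the two instances
`I(V;Y|S,X₁,X₂) ≥ 0` and `I(U;S|Y,W) ≥ 0` of the nonnegativity of conditional mutual information,
which in turn is Gibbs' inequality.
-/

section
variable {Ω α β γ : Type*} [Fintype Ω] {p : Ω → ℝ}

lemma pr_nonneg (hp : ∀ ω, 0 ≤ p ω) (X : Ω → α) (x : α) : 0 ≤ pr p X x :=
  Finset.sum_nonneg fun ω _ => by split <;> simp [hp ω]

lemma le_pr_apply (hp : ∀ ω, 0 ≤ p ω) (X : Ω → α) (ω : Ω) : p ω ≤ pr p X (X ω) := by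
  simpa [pr] using Finset.single_le_sum (f := fun ω' => if X ω' = X ω then p ω' else 0)
    (fun ω' _ => by split <;> simp [hp ω']) (Finset.mem_univ ω)

lemma sum_mul_comp_eq_sum_pr (p : Ω → ℝ) (X : Ω → α) (f : α → ℝ) :
    ∑ ω, p ω * f (X ω) = ∑ x ∈ Finset.univ.image X, pr p X x * f x := by
  simp only [pr, Finset.sum_mul, ite_mul, zero_mul]
  rw [Finset.sum_comm]
  refine Finset.sum_congr rfl fun ω _ => ?_
  simp [Finset.sum_ite_eq]

lemma pr_apply_pos (hp : ∀ ω, 0 ≤ p ω) (X : Ω → α) {ω : Ω} (hω : 0 < p ω) :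
    0 < pr p X (X ω) :=
  hω.trans_le (le_pr_apply hp X ω)

lemma sum_pr_eq_one (hp : IsPMF p) (X : Ω → α) : ∑ x ∈ Finset.univ.image X, pr p X x = 1 := by
  simpa [hp.2] using (sum_mul_comp_eq_sum_pr p X fun _ => 1).symm

lemma sum_pr_pair_eq_pr (p : Ω → ℝ) (X : Ω → α) (Z : Ω → γ) (z : γ) :
    ∑ x ∈ Finset.univ.image X, pr p (fun ω => (X ω, Z ω)) (x, z) = pr p Z z := by
  simp only [pr, Prod.mk.injEq, ite_and]
  rw [Finset.sum_comm]
  refine Finset.sum_congr rfl fun ω _ => ?_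
  simp [Finset.sum_ite_eq]

lemma ent_eq_neg_sum (p : Ω → ℝ) (X : Ω → α) :
    ent p X = -∑ ω, p ω * Real.logb 2 (pr p X (X ω)) := by
  rw [ent, sum_mul_comp_eq_sum_pr p X fun x => Real.logb 2 (pr p X x)]

lemma pr_apply_congr {X : Ω → α} {Y : Ω → β} (h : ∀ ω ω', X ω = X ω' ↔ Y ω = Y ω') (ω : Ω) :
    pr p Y (Y ω) = pr p X (X ω) := by
  simp only [pr, h]

lemma ent_congr {X : Ω → α} {Y : Ω → β} (h : ∀ ω ω', X ω = X ω' ↔ Y ω = Y ω') :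
    ent p X = ent p Y := by
  simp only [ent_eq_neg_sum, pr_apply_congr h]

lemma sum_mul_logb_nonpos (hp : IsPMF p) {G : Ω → ℝ} (hG : ∀ ω, 0 < p ω → 0 < G ω)
    (hsum : ∑ ω, p ω * G ω ≤ 1) : ∑ ω, p ω * Real.logb 2 (G ω) ≤ 0 := by
  have hlog2 : 0 < Real.log 2 := Real.log_pos one_lt_two
  have hterm : ∀ ω, p ω * Real.logb 2 (G ω) ≤ (p ω * G ω - p ω) / Real.log 2 := by
    intro ω
    rcases (hp.1 ω).eq_or_lt with h0 | hpos
    · simp [← h0]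
    · rw [Real.logb, mul_div_assoc', div_le_div_iff_of_pos_right hlog2]
      nlinarith [Real.log_le_sub_one_of_pos (hG ω hpos)]
  calc ∑ ω, p ω * Real.logb 2 (G ω) ≤ ∑ ω, (p ω * G ω - p ω) / Real.log 2 :=
        Finset.sum_le_sum fun ω _ => hterm ω
    _ = (∑ ω, p ω * G ω - 1) / Real.log 2 := by
        rw [← Finset.sum_div, Finset.sum_sub_distrib, hp.2]
    _ ≤ 0 := div_nonpos_of_nonpos_of_nonneg (by linarith) hlog2.le

lemma sum_mul_div_pr_le (W : Ω → α) {s : Finset α} (hs : ∀ ω, W ω ∈ s) {g : α → ℝ}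
    (hg : ∀ t ∈ s, 0 ≤ g t) : ∑ ω, p ω * (g (W ω) / pr p W (W ω)) ≤ ∑ t ∈ s, g t := by
  have himage : Finset.univ.image W ⊆ s := by
    intro t ht
    obtain ⟨ω, -, rfl⟩ := Finset.mem_image.1 ht
    exact hs ω
  rw [sum_mul_comp_eq_sum_pr p W fun t => g t / pr p W t]
  calc _ ≤ ∑ t ∈ Finset.univ.image W, g t := Finset.sum_le_sum fun t ht => by
          rcases eq_or_ne (pr p W t) 0 with h0 | h0
          · simpa [h0] using hg t (himage ht)
          · rw [mul_div_cancel₀ (g t) h0]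
    _ ≤ ∑ t ∈ s, g t := Finset.sum_le_sum_of_subset_of_nonneg himage fun t ht _ => hg t ht

lemma sum_pr_mul_pr_div_pr_eq_one (hp : IsPMF p) (X : Ω → α) (Y : Ω → β) (Z : Ω → γ) :
    ∑ t ∈ Finset.univ.image Z ×ˢ (Finset.univ.image X ×ˢ Finset.univ.image Y),
      pr p (fun ω => (X ω, Z ω)) (t.2.1, t.1) * pr p (fun ω => (Y ω, Z ω)) (t.2.2, t.1)
        / pr p Z t.1 = 1 := by
  calc _ = ∑ z ∈ Finset.univ.image Z,
          (∑ x ∈ Finset.univ.image X, pr p (fun ω => (X ω, Z ω)) (x, z))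
            * (∑ y ∈ Finset.univ.image Y, pr p (fun ω => (Y ω, Z ω)) (y, z)) / pr p Z z := by
        simp only [Finset.sum_product, Finset.sum_mul_sum, Finset.sum_div]
    _ = ∑ z ∈ Finset.univ.image Z, pr p Z z := by
        simp only [sum_pr_pair_eq_pr, mul_self_div_self]
    _ = 1 := sum_pr_eq_one hp Z

theorem cmi_nonneg (hp : IsPMF p) (X : Ω → α) (Y : Ω → β) (Z : Ω → γ) : 0 ≤ cmi p X Y Z := by
  let W : Ω → γ × α × β := fun ω => (Z ω, X ω, Y ω)
  -- `g` is the distribution `p(x,z) p(y,z) / p(z)` of total mass one, and `-cmi` is the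
  -- average of `log₂ (g / p(z,x,y))`.
  let g : γ × α × β → ℝ := fun t =>
    pr p (fun ω => (X ω, Z ω)) (t.2.1, t.1) * pr p (fun ω => (Y ω, Z ω)) (t.2.2, t.1) / pr p Z t.1
  have hW : ent p (fun ω => (X ω, Y ω, Z ω)) = ent p W :=
    ent_congr fun _ _ => by simp only [W, Prod.mk.injEq]; tauto
  have hlog : ∀ ω, p ω * Real.logb 2 (g (W ω) / pr p W (W ω)) =
      p ω * Real.logb 2 (pr p (fun ω => (X ω, Z ω)) (X ω, Z ω))
        + p ω * Real.logb 2 (pr p (fun ω => (Y ω, Z ω)) (Y ω, Z ω))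
        - p ω * Real.logb 2 (pr p Z (Z ω)) - p ω * Real.logb 2 (pr p W (W ω)) := by
    intro ω
    rcases (hp.1 ω).eq_or_lt with h0 | hω
    · simp [← h0]
    · have hXZ := pr_apply_pos hp.1 (fun ω => (X ω, Z ω)) hω
      have hYZ := pr_apply_pos hp.1 (fun ω => (Y ω, Z ω)) hω
      have hZ := pr_apply_pos hp.1 Z hω
      have hZXY := pr_apply_pos hp.1 W hω
      simp only [g, W]
      rw [Real.logb_div (by positivity) hZXY.ne', Real.logb_div (by positivity) hZ.ne',
        Real.logb_mul hXZ.ne' hYZ.ne']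
      ring
  have hcmi : cmi p X Y Z = -∑ ω, p ω * Real.logb 2 (g (W ω) / pr p W (W ω)) := by
    simp only [cmi, hW, ent_eq_neg_sum, hlog, Finset.sum_sub_distrib, Finset.sum_add_distrib]
    ring
  rw [hcmi, neg_nonneg]
  refine sum_mul_logb_nonpos hp (fun ω hω => ?_)
    ((sum_mul_div_pr_le W (fun ω => by simp [W]) fun t _ => ?_).trans
      (sum_pr_mul_pr_div_pr_eq_one hp X Y Z).le)
  · have := pr_apply_pos hp.1 (fun ω => (X ω, Z ω)) hω
    have := pr_apply_pos hp.1 (fun ω => (Y ω, Z ω)) hω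
    have := pr_apply_pos hp.1 Z hω
    have := pr_apply_pos hp.1 W hω
    positivity
  · have := pr_nonneg hp.1 (fun ω => (X ω, Z ω)) (t.2.1, t.1)
    have := pr_nonneg hp.1 (fun ω => (Y ω, Z ω)) (t.2.2, t.1)
    have := pr_nonneg hp.1 Z t.1
    positivity

end

theorem remove_aux_U_sum_rate_general
    {Ω 𝒮 𝒰 𝒱 𝒳₁ 𝒳₂ 𝒴 : Type*} [Fintype Ω]
    (p : Ω → ℝ) (hp : IsPMF p)
    (S : Ω → 𝒮) (U : Ω → 𝒰) (V : Ω → 𝒱) (X₁ : Ω → 𝒳₁) (X₂ : Ω → 𝒳₂) (Y : Ω → 𝒴)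
    (hMarkov : cmi p (fun ω => (U ω, V ω)) Y (fun ω => (S ω, X₁ ω, X₂ ω)) = 0) :
    mi p (fun ω => (U ω, V ω, X₁ ω, X₂ ω)) Y - mi p (fun ω => (U ω, V ω, X₁ ω, X₂ ω)) S
      ≤ mi p (fun ω => (V ω, X₁ ω, X₂ ω)) Y - mi p (fun ω => (V ω, X₁ ω, X₂ ω)) S := by
  have hV := cmi_nonneg hp V Y (fun ω => (S ω, X₁ ω, X₂ ω))
  have hU := cmi_nonneg hp U S (fun ω => (Y ω, V ω, X₁ ω, X₂ ω))
  simp only [mi, cmi] at hMarkov hV hU ⊢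
  -- the joint entropies of the hypotheses and of the goal, matched up to the order of the tuples
  obtain ⟨e₁, e₂, e₃, e₄, e₅, e₆⟩ :
      ent p (fun ω => ((U ω, V ω), S ω, X₁ ω, X₂ ω))
          = ent p (fun ω => ((U ω, V ω, X₁ ω, X₂ ω), S ω)) ∧
        ent p (fun ω => ((U ω, V ω), Y ω, S ω, X₁ ω, X₂ ω))
          = ent p (fun ω => (U ω, S ω, Y ω, V ω, X₁ ω, X₂ ω)) ∧
        ent p (fun ω => (V ω, S ω, X₁ ω, X₂ ω)) = ent p (fun ω => ((V ω, X₁ ω, X₂ ω), S ω)) ∧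
        ent p (fun ω => (V ω, Y ω, S ω, X₁ ω, X₂ ω))
          = ent p (fun ω => (S ω, Y ω, V ω, X₁ ω, X₂ ω)) ∧
        ent p (fun ω => (U ω, Y ω, V ω, X₁ ω, X₂ ω))
          = ent p (fun ω => ((U ω, V ω, X₁ ω, X₂ ω), Y ω)) ∧
        ent p (fun ω => (Y ω, V ω, X₁ ω, X₂ ω)) = ent p (fun ω => ((V ω, X₁ ω, X₂ ω), Y ω)) := by
    refine ⟨ent_congr ?_, ent_congr ?_, ent_congr ?_, ent_congr ?_, ent_congr ?_, ent_congr ?_⟩ <;>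
      · intro ω ω'
        simp only [Prod.mk.injEq]
        tauto
  linarith

/-- If `(U,V) ↔ (S,X₁,X₂) ↔ Y` is a Markov chain, then
`I(U,V,X₁,X₂ ; Y) - I(U,V,X₁,X₂ ; S) ≤ I(V,X₁,X₂ ; Y) - I(V,X₁,X₂ ; S)`. -/
theorem remove_aux_U_sum_rate
    {Ω 𝒮 𝒰 𝒱 𝒳₁ 𝒳₂ 𝒴 : Type*} [Fintype Ω] [Fintype 𝒮] [Fintype 𝒰] [Fintype 𝒱]
    [Fintype 𝒳₁] [Fintype 𝒳₂] [Fintype 𝒴]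
    (p : Ω → ℝ) (hp : IsPMF p)
    (S : Ω → 𝒮) (U : Ω → 𝒰) (V : Ω → 𝒱) (X₁ : Ω → 𝒳₁) (X₂ : Ω → 𝒳₂) (Y : Ω → 𝒴)
    (hMarkov : cmi p (fun ω => (U ω, V ω)) Y (fun ω => (S ω, X₁ ω, X₂ ω)) = 0) :
    mi p (fun ω => (U ω, V ω, X₁ ω, X₂ ω)) Y - mi p (fun ω => (U ω, V ω, X₁ ω, X₂ ω)) S
      ≤ mi p (fun ω => (V ω, X₁ ω, X₂ ω)) Y - mi p (fun ω => (V ω, X₁ ω, X₂ ω)) S :=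
  remove_aux_U_sum_rate_general p hp S U V X₁ X₂ Y hMarkov
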